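/- For any even positive integer n ≥ 4 and any natural number λ, the number of orbits of the dihedral group D_n acting on the set of proper λ-colorings of the cycle Γ_n equals (1/(2n)) ∑_{d | n} φ(n/d)(λ−1)^d + (1/4) λ (λ−1)^{n/2}. -/

import Mathlib

/-!
Burnside's lemma: the number of orbits times `2n` is the total number of colorings fixed by the
elements of `D_n`.

A rotation `v ↦ v + m` fixes exactly the colorings with period `d = gcd(n, m)`, i.e. the proper
colorings of the cycle of length `d`. By deletion–contraction of the closing edge these number
`(λ-1)^d + (-1)^d (λ-1)`, and the terms `(-1)^d (λ-1)` cancel in the sum over `m` because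
`(-1)^gcd(n, m) = (-1)^m` for even `n`.

A reflection `v ↦ m - v` with `m` odd maps the edge `{t, t+1}`, `2t + 1 = m`, to itself, so it fixes
no proper coloring. With `m = 2k` it is conjugate to `v ↦ -v`, whose fixed proper colorings are
the proper colorings of the path `0, 1, …, n/2`; there are `λ(λ-1)^{n/2}` of them.
-/

open Finset Function MulAction

abbrev PathColoring (k : ℕ) (α : Type*) :=
  {g : Fin (k + 1) → α // ∀ i : Fin k, g i.castSucc ≠ g i.succ}

abbrev CycleColoring (R α : Type*) [Add R] [One R] := {f : R → α // ∀ x, f x ≠ f (x + 1)}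

section ColoringCount

variable {α : Type*}

def PathColoring.snocEquiv (k : ℕ) :
    PathColoring (k + 1) α ≃ Σ g : PathColoring k α, {a : α // a ≠ g.1 (Fin.last k)} where
  toFun g := ⟨⟨Fin.init g.1, fun i => by simpa [Fin.init] using g.2 i.castSucc⟩,
    g.1 (Fin.last (k + 1)), by simpa [Fin.init] using (g.2 (Fin.last k)).symm⟩
  invFun p := ⟨Fin.snoc p.1.1 p.2.1,
    Fin.lastCases (by simpa using p.2.2.symm) fun i => by
      rw [Fin.succ_castSucc, Fin.snoc_castSucc, Fin.snoc_castSucc]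
      exact p.1.2 i⟩
  left_inv g := Subtype.ext (Fin.snoc_init_self g.1)
  right_inv p := Sigma.subtype_ext (Subtype.ext (Fin.init_snoc (α := fun _ => α) _ _))
    (Fin.snoc_last (α := fun _ => α) _ _)

theorem PathColoring.card [Finite α] (k : ℕ) :
    Nat.card (PathColoring k α) = Nat.card α * (Nat.card α - 1) ^ k := by
  classical
  have := Fintype.ofFinite α
  induction k with
  | zero =>
    rw [Nat.card_congr ((Equiv.subtypeUnivEquiv fun g i => i.elim0).trans
      (Equiv.funUnique (Fin 1) α))]
    simp
  | succ k ih =>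
    have hne (b : α) : Nat.card {a : α // a ≠ b} = Nat.card α - 1 := by
      simp [Nat.card_eq_fintype_card, Fintype.card_subtype_compl]
    rw [Nat.card_congr (PathColoring.snocEquiv k), Nat.card_sigma]
    simp [hne, ← Nat.card_eq_fintype_card, ih, pow_succ, mul_assoc]

theorem PathColoring.natCast_card {R : Type*} [CommRing R] [Finite α] (k : ℕ) :
    (Nat.card (PathColoring k α) : R) = Nat.card α * ((Nat.card α : R) - 1) ^ k := by
  rw [PathColoring.card]
  rcases Nat.eq_zero_or_pos (Nat.card α) with h | h
  · simp [h]
  · push_cast [Nat.cast_sub h]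
    ring

theorem PathColoring.apply_ne_of_val_eq_succ {k : ℕ} (g : PathColoring k α) {i j : Fin (k + 1)}
    (h : (j : ℕ) = i + 1) : g.1 i ≠ g.1 j := by
  have hi : (i : ℕ) < k := by omega
  convert g.2 ⟨i, hi⟩ using 2 <;> ext <;> simp [h]

theorem CycleColoring.fin_iff_path_and_last_ne {k : ℕ} (g : Fin (k + 2) → α) :
    (∀ x, g x ≠ g (x + 1)) ↔
      (∀ i : Fin (k + 1), g i.castSucc ≠ g i.succ) ∧ g (Fin.last (k + 1)) ≠ g 0 := by
  refine ⟨fun h => ⟨fun i => ?_, by simpa using h (Fin.last (k + 1))⟩, fun ⟨h, hlast⟩ x => ?_⟩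
  · simpa [Fin.coeSucc_eq_succ] using h i.castSucc
  · induction x using Fin.lastCases with
    | last => simpa using hlast
    | cast i => simpa [Fin.coeSucc_eq_succ] using h i

def PathColoring.endpointsEqEquiv (k : ℕ) :
    {g : PathColoring (k + 1) α // g.1 (Fin.last (k + 1)) = g.1 0} ≃
      CycleColoring (Fin (k + 1)) α where
  toFun g := ⟨Fin.init g.1.1, fun x => by
    induction x using Fin.lastCases with
    | last => simpa [Fin.init, g.2] using g.1.2 (Fin.last k)
    | cast i => simpa [Fin.init, Fin.coeSucc_eq_succ, ← Fin.succ_castSucc] using g.1.2 i.castSucc⟩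
  invFun h := ⟨⟨Fin.snoc h.1 (h.1 0), fun i => by
    induction i using Fin.lastCases with
    | last => simpa using h.2 (Fin.last k)
    | cast i =>
      rw [Fin.succ_castSucc, Fin.snoc_castSucc, Fin.snoc_castSucc]
      simpa [Fin.coeSucc_eq_succ] using h.2 i.castSucc⟩, by simp⟩
  left_inv g := by
    ext x
    induction x using Fin.lastCases with
    | last => simp [g.2, Fin.init]
    | cast i => simp [Fin.init]
  right_inv h := Subtype.ext (Fin.init_snoc (α := fun _ => α) _ _)

theorem PathColoring.card_eq_card_cycleColoring_add [Finite α] (k : ℕ) :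
    Nat.card (PathColoring (k + 1) α) =
      Nat.card (CycleColoring (Fin (k + 2)) α) + Nat.card (CycleColoring (Fin (k + 1)) α) := by
  classical
  rw [← Nat.card_congr (Equiv.sumCompl fun g : PathColoring (k + 1) α =>
      g.1 (Fin.last (k + 1)) = g.1 0),
    Nat.card_sum, add_comm, Nat.card_congr (PathColoring.endpointsEqEquiv k)]
  congr 1
  exact Nat.card_congr ((Equiv.subtypeSubtypeEquivSubtypeInter _ _).trans
    (Equiv.subtypeEquivRight fun g => (CycleColoring.fin_iff_path_and_last_ne g).symm))

theorem CycleColoring.natCast_card_fin {R : Type*} [CommRing R] [Finite α] (k : ℕ) :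
    (Nat.card (CycleColoring (Fin (k + 1)) α) : R) =
      ((Nat.card α : R) - 1) ^ (k + 1) + (-1) ^ (k + 1) * ((Nat.card α : R) - 1) := by
  induction k with
  | zero =>
    have : IsEmpty (CycleColoring (Fin 1) α) :=
      ⟨fun f => f.2 0 (congrArg f.1 (Subsingleton.elim _ _))⟩
    simp
  | succ k ih =>
    have h := congrArg (Nat.cast : ℕ → R) (PathColoring.card_eq_card_cycleColoring_add (α := α) k)
    rw [PathColoring.natCast_card, Nat.cast_add, ih] at h
    linear_combination -h

theorem CycleColoring.natCast_card_zmod {R : Type*} [CommRing R] [Finite α] (d : ℕ) [NeZero d] :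
    (Nat.card (CycleColoring (ZMod d) α) : R) =
      ((Nat.card α : R) - 1) ^ d + (-1) ^ d * ((Nat.card α : R) - 1) := by
  obtain ⟨k, rfl⟩ := Nat.exists_eq_succ_of_ne_zero (NeZero.ne d)
  exact CycleColoring.natCast_card_fin k

end ColoringCount

section Sums

variable {M : Type*} [AddCommMonoid M]

theorem ZMod.sum_val_eq_sum_range (n : ℕ) [NeZero n] (F : ℕ → M) :
    ∑ m : ZMod n, F m.val = ∑ j ∈ range n, F j := by
  obtain ⟨k, rfl⟩ := Nat.exists_eq_succ_of_ne_zero (NeZero.ne n)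
  exact Fin.sum_univ_eq_sum_range F (k + 1)

theorem ZMod.sum_gcd_val_eq_sum_divisors (n : ℕ) [NeZero n] (F : ℕ → M) :
    ∑ m : ZMod n, F (n.gcd m.val) = ∑ d ∈ n.divisors, Nat.totient (n / d) • F d := by
  rw [ZMod.sum_val_eq_sum_range n (fun j => F (n.gcd j)), ← sum_fiberwise_of_maps_to
    (g := n.gcd) fun j _ => Nat.mem_divisors.mpr ⟨Nat.gcd_dvd_left n j, NeZero.ne n⟩]
  refine sum_congr rfl fun d hd => ?_
  rw [sum_congr rfl fun j hj => congrArg F (mem_filter.mp hj).2, sum_const,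
    Nat.totient_div_of_dvd (Nat.dvd_of_mem_divisors hd)]

theorem Finset.sum_range_two_mul (F : ℕ → M) (h : ℕ) :
    ∑ j ∈ range (2 * h), F j = ∑ i ∈ range h, (F (2 * i) + F (2 * i + 1)) := by
  induction h with
  | zero => simp
  | succ h ih => rw [Nat.mul_succ, sum_range_succ, sum_range_succ, sum_range_succ, ih, add_assoc]

theorem Even.neg_one_pow_gcd {R : Type*} [Ring R] {n : ℕ} (hn : Even n) (v : ℕ) :
    (-1 : R) ^ n.gcd v = (-1) ^ v := by
  rw [neg_one_pow_eq_pow_mod_two, neg_one_pow_eq_pow_mod_two (n := v)]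
  have := Nat.dvd_gcd_iff (k := 2) (m := n) (n := v)
  have := even_iff_two_dvd.mp hn
  congr 1
  omega

theorem ZMod.sum_neg_one_pow_val {R : Type*} [Ring R] {n : ℕ} [NeZero n] (hn : Even n) :
    ∑ m : ZMod n, (-1 : R) ^ m.val = 0 := by
  obtain ⟨h, rfl⟩ := hn
  rw [ZMod.sum_val_eq_sum_range, ← two_mul, sum_range_two_mul]
  simp [pow_succ]

theorem ZMod.card_even_val {n : ℕ} [NeZero n] (hn : Even n) :
    #{m : ZMod n | Even m.val} = n / 2 := by
  obtain ⟨h, rfl⟩ := hn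
  rw [card_filter, ZMod.sum_val_eq_sum_range _ fun j => if Even j then 1 else 0, ← two_mul,
    sum_range_two_mul]
  simp

end Sums

section Periodic

variable {α : Type*}

theorem ZMod.periodic_iff_periodic_gcd {n : ℕ} [NeZero n] {f : ZMod n → α} (m : ZMod n) :
    Periodic f m ↔ Periodic f (n.gcd m.val) := by
  constructor
  · intro h
    have hbezout : ((n.gcd m.val : ℕ) : ZMod n) = (n.gcdB m.val : ZMod n) * m := by
      have := congrArg (Int.cast : ℤ → ZMod n) (Nat.gcd_eq_gcd_ab n m.val)
      push_cast at this
      rw [this, ZMod.natCast_self, ZMod.natCast_zmod_val]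
      ring
    rw [hbezout]
    exact h.int_mul _
  · intro h
    have hdiv : m = ((m.val / n.gcd m.val : ℕ) : ZMod n) * (n.gcd m.val : ℕ) := by
      rw [← Nat.cast_mul, Nat.div_mul_cancel (Nat.gcd_dvd_right n m.val), ZMod.natCast_zmod_val]
    rw [hdiv]
    exact h.nat_mul _

def ZMod.periodicEquiv {d n : ℕ} [NeZero n] (hd : d ∣ n) :
    (ZMod d → α) ≃ {f : ZMod n → α // Periodic f d} where
  toFun g := ⟨g ∘ ZMod.castHom hd (ZMod d), fun v => by
    simp only [comp_apply, map_add, map_natCast, ZMod.natCast_self, add_zero]⟩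
  invFun f x := f.1 x.val
  left_inv g := by
    have : NeZero d := ⟨fun h => NeZero.ne n (Nat.eq_zero_of_zero_dvd (h ▸ hd))⟩
    ext x
    simp
  right_inv f := by
    ext v
    have hv : v = ((v.val % d : ℕ) : ZMod n) + ((v.val / d : ℕ) : ZMod n) * d := by
      rw [← Nat.cast_mul, ← Nat.cast_add, Nat.mod_add_div', ZMod.natCast_zmod_val]
    conv_rhs => rw [hv, f.2.nat_mul]
    show f.1 (ZMod.castHom hd (ZMod d) v).val = _
    rw [ZMod.castHom_apply, ZMod.cast_eq_val, ZMod.val_natCast]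

theorem ZMod.cycleColoring_comp_castHom_iff {d n : ℕ} (hd : d ∣ n) (g : ZMod d → α) :
    (∀ x, (g ∘ ZMod.castHom hd (ZMod d)) x ≠ (g ∘ ZMod.castHom hd (ZMod d)) (x + 1)) ↔
      ∀ x, g x ≠ g (x + 1) := by
  simp only [comp_apply, map_add, map_one]
  exact (ZMod.castHom_surjective hd).forall (p := fun y => g y ≠ g (y + 1)) |>.symm

def CycleColoring.periodicEquiv {d n : ℕ} [NeZero n] (hd : d ∣ n) :
    {f : ZMod n → α // (∀ x, f x ≠ f (x + 1)) ∧ Periodic f d} ≃ CycleColoring (ZMod d) α :=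
  (((Equiv.subtypeEquiv (ZMod.periodicEquiv hd) fun g =>
    (ZMod.cycleColoring_comp_castHom_iff hd g).symm).trans
      (Equiv.subtypeSubtypeEquivSubtypeInter _ _)).trans
        (Equiv.subtypeEquivRight fun _ => and_comm)).symm

end Periodic

namespace ZMod

variable {n : ℕ} [NeZero n]

def cycleDist (v : ZMod n) : Fin (n / 2 + 1) :=
  ⟨v.valMinAbs.natAbs, Nat.lt_succ_of_le v.natAbs_valMinAbs_le⟩

theorem cycleDist_neg (v : ZMod n) : cycleDist (-v) = cycleDist v :=
  Fin.ext (natAbs_valMinAbs_neg v)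

theorem natCast_cycleDist (v : ZMod n) :
    ((cycleDist v : ℕ) : ZMod n) = v ∨ ((cycleDist v : ℕ) : ZMod n) = -v := by
  rw [cycleDist, natCast_natAbs_valMinAbs]
  split_ifs <;> simp

theorem cycleDist_natCast (i : Fin (n / 2 + 1)) : cycleDist ((i : ℕ) : ZMod n) = i :=
  Fin.ext (by simp [cycleDist, valMinAbs_natCast_of_le_half (Nat.lt_succ_iff.mp i.2)])

theorem cycleDist_add_one (hn : Even n) (v : ZMod n) :
    (cycleDist (v + 1) : ℕ) = cycleDist v + 1 ∨ (cycleDist v : ℕ) = cycleDist (v + 1) + 1 := by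
  have hn2 : 2 ≤ n := by obtain ⟨h, rfl⟩ := hn; have := NeZero.ne (h + h); omega
  have hv := v.val_lt
  have hval : (v + 1).val = (v.val + 1) % n := by
    rw [val_add, val_one_eq_one_mod, Nat.mod_eq_of_lt (by omega : 1 < n)]
  simp only [cycleDist, valMinAbs_natAbs_eq_min, hval]
  obtain ⟨h, rfl⟩ := hn
  rcases Nat.lt_or_ge (v.val + 1) (h + h) with hlt | hge
  · rw [Nat.mod_eq_of_lt hlt]; omega
  · rw [show v.val + 1 = h + h by omega, Nat.mod_self]; omega

end ZMod

def CycleColoring.evenEquivPathColoring {α : Type*} {n : ℕ} [NeZero n] (hn : Even n) :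
    {f : ZMod n → α // (∀ x, f x ≠ f (x + 1)) ∧ ∀ v, f (-v) = f v} ≃ PathColoring (n / 2) α where
  toFun f := ⟨fun i => f.1 (i : ℕ), fun i => by simpa using f.2.1 (i : ℕ)⟩
  invFun g := ⟨fun v => g.1 (ZMod.cycleDist v), fun v => by
    rcases ZMod.cycleDist_add_one hn v with h | h
    · exact g.apply_ne_of_val_eq_succ h
    · exact (g.apply_ne_of_val_eq_succ h).symm, fun v => congrArg g.1 (ZMod.cycleDist_neg v)⟩
  left_inv f := by
    ext v
    rcases ZMod.natCast_cycleDist v with h | h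
    · exact congrArg f.1 h
    · simp only [h, f.2.2]
  right_inv g := by
    ext i
    exact congrArg g.1 (ZMod.cycleDist_natCast i)

theorem MulAction.sum_natCard_fixedBy_eq_natCard_orbits_mul (G X : Type*) [Group G] [Fintype G]
    [MulAction G X] [Finite X] :
    ∑ g : G, Nat.card (fixedBy X g) = Nat.card (orbitRel.Quotient G X) * Nat.card G := by
  classical
  have := Fintype.ofFinite X
  simpa only [Fintype.card_eq_nat_card] using sum_card_fixedBy_eq_card_orbits_mul_card_group G X

theorem DihedralGroup.sum_eq {M : Type*} [AddCommMonoid M] {n : ℕ} [NeZero n]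
    (F : DihedralGroup n → M) : ∑ g, F g = ∑ m, F (r m) + ∑ m, F (sr m) := by
  rw [← equivSum.symm.sum_comp, Fintype.sum_sum_type]
  rfl

namespace CycleColoring

open DihedralGroup

variable {n : ℕ} {α : Type*}

instance : SMul (DihedralGroup n) (CycleColoring (ZMod n) α) where
  smul
    | r m, f => ⟨fun v => f.1 (v + m), fun v => by simpa [add_right_comm] using f.2 (v + m)⟩
    | sr m, f => ⟨fun v => f.1 (m - v), fun v => by
        simpa [sub_add_eq_sub_sub] using (f.2 (m - (v + 1))).symm⟩

@[simp]
theorem coe_r_smul (m : ZMod n) (f : CycleColoring (ZMod n) α) :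
    (r m • f).1 = fun v => f.1 (v + m) := rfl

@[simp]
theorem coe_sr_smul (m : ZMod n) (f : CycleColoring (ZMod n) α) :
    (sr m • f).1 = fun v => f.1 (m - v) := rfl

instance : MulAction (DihedralGroup n) (CycleColoring (ZMod n) α) where
  one_smul f := Subtype.ext <| by rw [one_def, coe_r_smul]; simp
  mul_smul g h f := by
    rcases g with a | a <;> rcases h with b | b <;> refine Subtype.ext (funext fun v => ?_) <;>
      simp only [r_mul_r, r_mul_sr, sr_mul_r, sr_mul_sr, coe_r_smul, coe_sr_smul] <;>
      exact congrArg f.1 (by ring)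

theorem orbitRel_iff (f g : CycleColoring (ZMod n) α) :
    (orbitRel (DihedralGroup n) (CycleColoring (ZMod n) α)).r f g ↔
      ∃ m : ZMod n, (∀ v, g.1 v = f.1 (v + m)) ∨ ∀ v, g.1 v = f.1 (m - v) := by
  rw [orbitRel_apply, mem_orbit_iff]
  constructor
  · rintro ⟨m | m, rfl⟩
    · exact ⟨-m, Or.inl fun v => congrArg g.1 (by simp)⟩
    · exact ⟨m, Or.inr fun v => congrArg g.1 (by simp)⟩
  · rintro ⟨m, h | h⟩
    · exact ⟨r (-m), Subtype.ext (funext fun v => by simp [h])⟩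
    · exact ⟨sr m, Subtype.ext (funext fun v => by simp [h])⟩

theorem r_smul_eq_self_iff (m : ZMod n) (f : CycleColoring (ZMod n) α) :
    r m • f = f ↔ Periodic f.1 m := by
  rw [Subtype.ext_iff, funext_iff]
  rfl

theorem sr_smul_eq_self_iff (m : ZMod n) (f : CycleColoring (ZMod n) α) :
    sr m • f = f ↔ ∀ v, f.1 (m - v) = f.1 v := by
  rw [Subtype.ext_iff, funext_iff]
  rfl

def fixedByEquiv (g : DihedralGroup n) (P : (ZMod n → α) → Prop)
    (hP : ∀ f : CycleColoring (ZMod n) α, g • f = f ↔ P f.1) :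
    fixedBy (CycleColoring (ZMod n) α) g ≃ {f : ZMod n → α // (∀ x, f x ≠ f (x + 1)) ∧ P f} where
  toFun f := ⟨f.1.1, f.1.2, (hP f.1).1 f.2⟩
  invFun f := ⟨⟨f.1, f.2.1⟩, (hP _).2 f.2.2⟩

theorem card_fixedBy_r [NeZero n] (m : ZMod n) :
    Nat.card (fixedBy (CycleColoring (ZMod n) α) (r m)) =
      Nat.card (CycleColoring (ZMod (n.gcd m.val)) α) :=
  Nat.card_congr <| (fixedByEquiv _ _ fun f =>
    (r_smul_eq_self_iff m f).trans (ZMod.periodic_iff_periodic_gcd m)).trans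
      (periodicEquiv (Nat.gcd_dvd_left n m.val))

theorem fixedBy_sr_eq_empty [NeZero n] {m : ZMod n} (hm : Odd m.val) :
    fixedBy (CycleColoring (ZMod n) α) (sr m) = ∅ := by
  refine Set.eq_empty_of_forall_notMem fun f hf => ?_
  obtain ⟨t, ht⟩ := hm
  have hmt : m - t = t + 1 := by
    rw [← ZMod.natCast_zmod_val m, ht]
    push_cast
    ring
  exact f.2 t (by rw [← hmt, (sr_smul_eq_self_iff m f).1 hf])

theorem card_fixedBy_sr [NeZero n] (hn : Even n) {m : ZMod n} (hm : Even m.val) :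
    Nat.card (fixedBy (CycleColoring (ZMod n) α) (sr m)) = Nat.card (PathColoring (n / 2) α) := by
  obtain ⟨k, hk⟩ := hm
  have hconj : sr m = r (-k : ZMod n) * sr 0 * (r (-k : ZMod n))⁻¹ := by
    rw [inv_r, r_mul_sr, sr_mul_r, ← ZMod.natCast_zmod_val m, hk]
    push_cast
    ring_nf
  rw [hconj, ← smul_fixedBy, Set.natCard_smul_set]
  exact Nat.card_congr <| (fixedByEquiv _ _ fun f =>
    (sr_smul_eq_self_iff 0 f).trans (by simp only [zero_sub])).trans (evenEquivPathColoring hn)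

theorem sum_card_fixedBy_r {R : Type*} [CommRing R] [NeZero n] [Finite α] (hn : Even n) :
    ∑ m : ZMod n, (Nat.card (fixedBy (CycleColoring (ZMod n) α) (r m)) : R) =
      ∑ d ∈ n.divisors, Nat.totient (n / d) • ((Nat.card α : R) - 1) ^ d := by
  have hcard (m : ZMod n) : (Nat.card (fixedBy (CycleColoring (ZMod n) α) (r m)) : R) =
      ((Nat.card α : R) - 1) ^ n.gcd m.val + (-1) ^ m.val * ((Nat.card α : R) - 1) := by
    have : NeZero (n.gcd m.val) := ⟨Nat.gcd_ne_zero_left (NeZero.ne n)⟩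
    rw [card_fixedBy_r, natCast_card_zmod, hn.neg_one_pow_gcd]
  rw [sum_congr rfl fun m _ => hcard m, sum_add_distrib, ← sum_mul, ZMod.sum_neg_one_pow_val hn,
    zero_mul, add_zero, ZMod.sum_gcd_val_eq_sum_divisors n fun d => ((Nat.card α : R) - 1) ^ d]

theorem sum_card_fixedBy_sr [NeZero n] (hn : Even n) :
    ∑ m : ZMod n, Nat.card (fixedBy (CycleColoring (ZMod n) α) (sr m)) =
      n / 2 * Nat.card (PathColoring (n / 2) α) := by
  have hcard (m : ZMod n) : Nat.card (fixedBy (CycleColoring (ZMod n) α) (sr m)) =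
      if Even m.val then Nat.card (PathColoring (n / 2) α) else 0 := by
    split_ifs with hm
    · exact card_fixedBy_sr hn hm
    · simp [fixedBy_sr_eq_empty (Nat.not_even_iff_odd.mp hm)]
  rw [sum_congr rfl fun m _ => hcard m, sum_ite, sum_const_zero, add_zero, sum_const,
    ZMod.card_even_val hn, smul_eq_mul]

theorem card_orbits_mul [NeZero n] [Finite α] (hn : Even n) :
    (Nat.card (orbitRel.Quotient (DihedralGroup n) (CycleColoring (ZMod n) α)) : ℚ) * (2 * n) =
      ∑ d ∈ n.divisors, Nat.totient (n / d) • ((Nat.card α : ℚ) - 1) ^ d +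
        (n / 2 : ℕ) * (Nat.card α * ((Nat.card α : ℚ) - 1) ^ (n / 2)) := by
  have hburnside := congrArg (Nat.cast : ℕ → ℚ)
    (sum_natCard_fixedBy_eq_natCard_orbits_mul (DihedralGroup n) (CycleColoring (ZMod n) α))
  rw [DihedralGroup.sum_eq, Nat.cast_add, Nat.cast_sum, sum_card_fixedBy_r hn,
    sum_card_fixedBy_sr hn, Nat.cast_mul, PathColoring.natCast_card,
    Nat.card_eq_fintype_card (α := DihedralGroup n), DihedralGroup.card] at hburnside
  push_cast at hburnside
  linear_combination -hburnside

end CycleColoring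

/-- For even `n ≥ 4`, the number of orbits of the dihedral group `D_n`
(generated by the rotations `v ↦ v + m` and the reflections `v ↦ m - v`) on
proper `l`-colorings of the cycle `Γ_n` equals
`(1/(2n)) ∑_{d ∣ n} φ(n/d) (l-1)^d + (1/4) l (l-1)^{n/2}`. -/
theorem orbital_stmt11 (n l : ℕ) (hn : 4 ≤ n) (heven : Even n) :
    (Nat.card (Quot (fun f g : {f : ZMod n → Fin l // ∀ x : ZMod n, f x ≠ f (x + 1)} =>
        ∃ m : ZMod n, (∀ v : ZMod n, g.1 v = f.1 (v + m)) ∨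
          (∀ v : ZMod n, g.1 v = f.1 (m - v)))) : ℚ) =
      (1 / (2 * (n : ℚ))) * ∑ d ∈ n.divisors, (Nat.totient (n / d) : ℚ) * ((l : ℚ) - 1) ^ d
        + (1 / 4) * (l : ℚ) * ((l : ℚ) - 1) ^ (n / 2) := by
  have : NeZero n := ⟨by omega⟩
  have hcount := CycleColoring.card_orbits_mul (α := Fin l) heven
  have hhalf : ((n / 2 : ℕ) : ℚ) = n / 2 := Nat.cast_div_charZero (even_iff_two_dvd.mp heven)
  simp only [Nat.card_fin, nsmul_eq_mul, hhalf] at hcount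
  have hquot : Nat.card (Quot fun f g : CycleColoring (ZMod n) (Fin l) =>
      ∃ m : ZMod n, (∀ v, g.1 v = f.1 (v + m)) ∨ ∀ v, g.1 v = f.1 (m - v)) =
        Nat.card (orbitRel.Quotient (DihedralGroup n) (CycleColoring (ZMod n) (Fin l))) :=
    Nat.card_congr (Quot.congrRight fun f g => (CycleColoring.orbitRel_iff f g).symm)
  rw [hquot, (eq_div_iff (by positivity)).mpr hcount]
  field_simp
  ring
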